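/- Let a_i, a_j, a_k ∈ ℝ² be such that a_j − a_i and a_k − a_i are linearly independent, let δa_i, δa_j, δa_k ∈ ℝ², and let v ∈ ℝ² satisfy ‖v − a_i‖ = ‖v − a_j‖ = ‖v − a_k‖. Then there exist τ₁ > 0 and a unique smooth function z_v : [0,τ₁] → ℝ² with z_v(0) = v and ‖z_v(t) − (a_i + tδa_i)‖ = ‖z_v(t) − (a_j + tδa_j)‖ = ‖z_v(t) − (a_k + tδa_k)‖ for all t ∈ [0,τ₁]; moreover z_v′(0) = M(j,k,i)δa_i + M(k,i,j)δa_j + M(i,j,k)δa_k, where M(i,j,k) := (1/Q(i,j,k)) · (a_i − a_j)^⊥ ⊗ (v − a_k)ᵀ (a 2×2 matrix) and Q(i,j,k) := det of the 2×2 matrix whose rows are (a_j − a_i)ᵀ and (a_k − a_i)ᵀ. -/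

import Mathlib

open Set Metric
open scoped ENNReal NNReal

noncomputable section

/-- The plane ℝ². -/
abbrev Plane : Type := EuclideanSpace ℝ (Fin 2)

/-- Rotation by π/2: `(v₁,v₂)^⊥ = (−v₂,v₁)`. -/
def perp (w : Plane) : Plane := (WithLp.equiv 2 (Fin 2 → ℝ)).symm ![-(w 1), w 0]

/-- The Euclidean Voronoi cell
`V_i(a) = int {x ∈ A : ‖x − a_i‖ ≤ ‖x − a_k‖ for all k}`. -/
def vorCell {κ : ℕ} (A : Set Plane) (a : Fin κ → Plane) (i : Fin κ) : Set Plane :=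
  interior {x | x ∈ A ∧ ∀ k, ‖x - a i‖ ≤ ‖x - a k‖}

/-- `Q(i,j,k)`: determinant of the 2×2 matrix with rows `(a_j − a_i)ᵀ` and
`(a_k − a_i)ᵀ`. -/
def Qvor (ai aj ak : Plane) : ℝ :=
  Matrix.det !![(aj - ai) 0, (aj - ai) 1; (ak - ai) 0, (ak - ai) 1]

/-- `M(i,j,k) δ` where `M(i,j,k) = ((a_i − a_j)^⊥ ⊗ (v − a_k)ᵀ)/Q(i,j,k)` is a
2×2 matrix acting on the perturbation `δ ∈ ℝ²`. -/
def Mvor (ai aj ak v : Plane) (δ : Plane) : Plane :=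
  ((inner ℝ (v - ak) δ : ℝ) / Qvor ai aj ak) • perp (ai - aj)

/-! ### Auxiliary scalar functions -/

/-- coordinate of the moving site -/
def bf (a δ : Plane) (i : Fin 2) (t : ℝ) : ℝ := a i + t * δ i

def uf (a δa b δb : Plane) (i : Fin 2) (t : ℝ) : ℝ := bf b δb i t - bf a δa i t

def cf (a δa b δb : Plane) (t : ℝ) : ℝ :=
  ((bf b δb 0 t) ^ 2 + (bf b δb 1 t) ^ 2 - (bf a δa 0 t) ^ 2 - (bf a δa 1 t) ^ 2) / 2

def Df (a δa b δb c δc : Plane) (t : ℝ) : ℝ :=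
  uf a δa b δb 0 t * uf a δa c δc 1 t - uf a δa b δb 1 t * uf a δa c δc 0 t

def N0f (a δa b δb c δc : Plane) (t : ℝ) : ℝ :=
  cf a δa b δb t * uf a δa c δc 1 t - cf a δa c δc t * uf a δa b δb 1 t

def N1f (a δa b δb c δc : Plane) (t : ℝ) : ℝ :=
  cf a δa c δc t * uf a δa b δb 0 t - cf a δa b δb t * uf a δa c δc 0 t

def Zf (a δa b δb c δc : Plane) (t : ℝ) : Plane :=
  (WithLp.equiv 2 (Fin 2 → ℝ)).symm
    ![N0f a δa b δb c δc t / Df a δa b δb c δc t,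
      N1f a δa b δb c δc t / Df a δa b δb c δc t]

/-! ### Basic lemmas -/

lemma norm_sq_of_eq (x y : Plane) (h : ‖x‖ = ‖y‖) :
    (x 0) ^ 2 + (x 1) ^ 2 = (y 0) ^ 2 + (y 1) ^ 2 := by
  rw [EuclideanSpace.norm_eq, EuclideanSpace.norm_eq, Fin.sum_univ_two, Fin.sum_univ_two] at h
  simp only [Real.norm_eq_abs, sq_abs] at h
  have h2 := congrArg (· ^ 2) h
  rwa [Real.sq_sqrt (by positivity), Real.sq_sqrt (by positivity)] at h2

lemma norm_eq_of_sq (x y : Plane) (h : (x 0) ^ 2 + (x 1) ^ 2 = (y 0) ^ 2 + (y 1) ^ 2) :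
    ‖x‖ = ‖y‖ := by
  rw [EuclideanSpace.norm_eq, EuclideanSpace.norm_eq]
  simp only [Real.norm_eq_abs, sq_abs, Fin.sum_univ_two, h]

lemma det_ne_of_indep (u w : Plane) (h : LinearIndependent ℝ ![u, w]) :
    u 0 * w 1 - u 1 * w 0 ≠ 0 := by
  rw [LinearIndependent.pair_iff] at h
  intro hD
  have key : ∀ s t : ℝ, s * u 0 + t * w 0 = 0 → s * u 1 + t * w 1 = 0 → s = 0 ∧ t = 0 := by
    intro s t h0 h1
    apply h s t
    ext i
    fin_cases i
    · simpa [PiLp.add_apply, PiLp.smul_apply, smul_eq_mul] using h0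
    · simpa [PiLp.add_apply, PiLp.smul_apply, smul_eq_mul] using h1
  have h1 := key (w 0) (-(u 0)) (by ring) (by nlinarith)
  have h2 := key (w 1) (-(u 1)) (by nlinarith) (by ring)
  have h3 := key 1 0 (by simp; linarith [h1.2]) (by simp; linarith [h2.2])
  exact one_ne_zero h3.1

/-! ### Smoothness -/

lemma contDiff_Df (a δa b δb c δc : Plane) : ContDiff ℝ (⊤ : ℕ∞) (Df a δa b δb c δc) := by
  unfold Df uf bf; fun_prop

lemma contDiff_cf (a δa b δb : Plane) : ContDiff ℝ (⊤ : ℕ∞) (cf a δa b δb) := by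
  unfold cf bf; exact ContDiff.div_const (by fun_prop) 2

lemma contDiff_uf (a δa b δb : Plane) (i : Fin 2) : ContDiff ℝ (⊤ : ℕ∞) (uf a δa b δb i) := by
  unfold uf bf; fun_prop

lemma contDiff_N0f (a δa b δb c δc : Plane) : ContDiff ℝ (⊤ : ℕ∞) (N0f a δa b δb c δc) := by
  unfold N0f
  exact ((contDiff_cf a δa b δb).mul (contDiff_uf a δa c δc 1)).sub
    ((contDiff_cf a δa c δc).mul (contDiff_uf a δa b δb 1))

lemma contDiff_N1f (a δa b δb c δc : Plane) : ContDiff ℝ (⊤ : ℕ∞) (N1f a δa b δb c δc) := by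
  unfold N1f
  exact ((contDiff_cf a δa c δc).mul (contDiff_uf a δa b δb 0)).sub
    ((contDiff_cf a δa b δb).mul (contDiff_uf a δa c δc 0))

/-! ### Derivatives -/

lemma hasDerivAt_bf (a δ : Plane) (i : Fin 2) (t : ℝ) : HasDerivAt (bf a δ i) (δ i) t := by
  unfold bf
  simpa using ((hasDerivAt_id t).mul_const (δ i)).const_add (a i)

lemma hasDerivAt_uf (a δa b δb : Plane) (i : Fin 2) (t : ℝ) :
    HasDerivAt (uf a δa b δb i) (δb i - δa i) t :=
  (hasDerivAt_bf b δb i t).sub (hasDerivAt_bf a δa i t)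

/-- derivative value of `cf` -/
def cdf (a δa b δb : Plane) (t : ℝ) : ℝ :=
  bf b δb 0 t * δb 0 + bf b δb 1 t * δb 1 - bf a δa 0 t * δa 0 - bf a δa 1 t * δa 1

lemma hasDerivAt_cf (a δa b δb : Plane) (t : ℝ) :
    HasDerivAt (cf a δa b δb) (cdf a δa b δb t) t := by
  unfold cf
  have h := (((((hasDerivAt_bf b δb 0 t).pow 2).add ((hasDerivAt_bf b δb 1 t).pow 2)).sub
      ((hasDerivAt_bf a δa 0 t).pow 2)).sub ((hasDerivAt_bf a δa 1 t).pow 2)).div_const 2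
  refine h.congr_deriv ?_
  unfold cdf
  ring

def Ddf (a δa b δb c δc : Plane) (t : ℝ) : ℝ :=
  (δb 0 - δa 0) * uf a δa c δc 1 t + uf a δa b δb 0 t * (δc 1 - δa 1) -
    ((δb 1 - δa 1) * uf a δa c δc 0 t + uf a δa b δb 1 t * (δc 0 - δa 0))

lemma hasDerivAt_Df (a δa b δb c δc : Plane) (t : ℝ) :
    HasDerivAt (Df a δa b δb c δc) (Ddf a δa b δb c δc t) t := by
  unfold Df Ddf
  exact ((hasDerivAt_uf a δa b δb 0 t).mul (hasDerivAt_uf a δa c δc 1 t)).sub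
    ((hasDerivAt_uf a δa b δb 1 t).mul (hasDerivAt_uf a δa c δc 0 t))

def N0df (a δa b δb c δc : Plane) (t : ℝ) : ℝ :=
  cdf a δa b δb t * uf a δa c δc 1 t + cf a δa b δb t * (δc 1 - δa 1) -
    (cdf a δa c δc t * uf a δa b δb 1 t + cf a δa c δc t * (δb 1 - δa 1))

lemma hasDerivAt_N0f (a δa b δb c δc : Plane) (t : ℝ) :
    HasDerivAt (N0f a δa b δb c δc) (N0df a δa b δb c δc t) t := by
  unfold N0f N0df
  exact ((hasDerivAt_cf a δa b δb t).mul (hasDerivAt_uf a δa c δc 1 t)).sub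
    ((hasDerivAt_cf a δa c δc t).mul (hasDerivAt_uf a δa b δb 1 t))

def N1df (a δa b δb c δc : Plane) (t : ℝ) : ℝ :=
  cdf a δa c δc t * uf a δa b δb 0 t + cf a δa c δc t * (δb 0 - δa 0) -
    (cdf a δa b δb t * uf a δa c δc 0 t + cf a δa b δb t * (δc 0 - δa 0))

lemma hasDerivAt_N1f (a δa b δb c δc : Plane) (t : ℝ) :
    HasDerivAt (N1f a δa b δb c δc) (N1df a δa b δb c δc t) t := by
  unfold N1f N1df
  exact ((hasDerivAt_cf a δa c δc t).mul (hasDerivAt_uf a δa b δb 0 t)).sub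
    ((hasDerivAt_cf a δa b δb t).mul (hasDerivAt_uf a δa c δc 0 t))

lemma contDiffOn_Zf (a δa b δb c δc : Plane) (s : Set ℝ)
    (hs : ∀ t ∈ s, Df a δa b δb c δc t ≠ 0) :
    ContDiffOn ℝ (⊤ : ℕ∞) (Zf a δa b δb c δc) s := by
  have hF : ContDiffOn ℝ (⊤ : ℕ∞)
      (fun t => (![N0f a δa b δb c δc t / Df a δa b δb c δc t,
        N1f a δa b δb c δc t / Df a δa b δb c δc t] : Fin 2 → ℝ)) s := by
    apply contDiffOn_pi.2
    intro i
    fin_cases i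
    · exact ((contDiff_N0f a δa b δb c δc).contDiffOn.div
        (contDiff_Df a δa b δb c δc).contDiffOn hs)
    · exact ((contDiff_N1f a δa b δb c δc).contDiffOn.div
        (contDiff_Df a δa b δb c δc).contDiffOn hs)
  exact ((EuclideanSpace.equiv (Fin 2) ℝ).symm.contDiff.comp_contDiffOn hF)

lemma perp_apply_zero (w : Plane) : perp w 0 = -(w 1) := rfl
lemma perp_apply_one (w : Plane) : perp w 1 = w 0 := rfl

lemma inner_two (x y : Plane) : (inner ℝ x y : ℝ) = x 0 * y 0 + x 1 * y 1 := by
  simp [PiLp.inner_apply, RCLike.inner_apply, Fin.sum_univ_two, mul_comm]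


/-- perturbation of an interior Voronoi vertex: if `a_j − a_i`
and `a_k − a_i` are linearly independent and `v` is equidistant from `a_i, a_j,
a_k`, then for small time there is a unique smooth curve `z_v` with `z_v(0) = v`
remaining equidistant from the perturbed sites, and
`z_v′(0) = M(j,k,i)δa_i + M(k,i,j)δa_j + M(i,j,k)δa_k`. -/
theorem statement12
    (ai aj ak : Plane)
    (hindep : LinearIndependent ℝ ![aj - ai, ak - ai])
    (δai δaj δak : Plane)
    (v : Plane)
    (hvij : ‖v - ai‖ = ‖v - aj‖) (hvik : ‖v - ai‖ = ‖v - ak‖) :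
    ∃ τ₁ > (0:ℝ), ∃ z : ℝ → Plane,
      (ContDiffOn ℝ (⊤ : ℕ∞) z (Icc 0 τ₁) ∧ z 0 = v ∧
        ∀ t ∈ Icc (0:ℝ) τ₁,
          ‖z t - (ai + t • δai)‖ = ‖z t - (aj + t • δaj)‖ ∧
          ‖z t - (ai + t • δai)‖ = ‖z t - (ak + t • δak)‖) ∧
      -- uniqueness of the smooth curve on `[0,τ₁]`
      (∀ w : ℝ → Plane,
        (ContDiffOn ℝ (⊤ : ℕ∞) w (Icc 0 τ₁) ∧ w 0 = v ∧
          ∀ t ∈ Icc (0:ℝ) τ₁,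
            ‖w t - (ai + t • δai)‖ = ‖w t - (aj + t • δaj)‖ ∧
            ‖w t - (ai + t • δai)‖ = ‖w t - (ak + t • δak)‖) →
        EqOn w z (Icc 0 τ₁)) ∧
      -- the derivative formula
      HasDerivWithinAt z
        (Mvor aj ak ai v δai + Mvor ak ai aj v δaj + Mvor ai aj ak v δak)
        (Icc 0 τ₁) 0 := by
  have hD0 : Df ai δai aj δaj ak δak 0 ≠ 0 := by
    have h := det_ne_of_indep (aj - ai) (ak - ai) hindep
    simpa [Df, uf, bf] using h
  have hcont : Continuous (Df ai δai aj δaj ak δak) := (contDiff_Df _ _ _ _ _ _).continuous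
  have hev : ∀ᶠ t in nhds (0:ℝ), Df ai δai aj δaj ak δak t ≠ 0 :=
    hcont.continuousAt.eventually_ne hD0
  obtain ⟨ε, hε, hball⟩ := Metric.eventually_nhds_iff.mp hev
  have hDt : ∀ t ∈ Icc (0:ℝ) (ε/2), Df ai δai aj δaj ak δak t ≠ 0 := by
    intro t ht
    apply hball
    rw [Real.dist_eq, sub_zero, abs_of_nonneg ht.1]
    linarith [ht.2]
  -- equidistance of v in coordinates
  have e1 : (v 0 - ai 0)^2 + (v 1 - ai 1)^2 = (v 0 - aj 0)^2 + (v 1 - aj 1)^2 := by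
    simpa using norm_sq_of_eq _ _ hvij
  have e2 : (v 0 - ai 0)^2 + (v 1 - ai 1)^2 = (v 0 - ak 0)^2 + (v 1 - ak 1)^2 := by
    simpa using norm_sq_of_eq _ _ hvik
  have hv0 : v 0 * Df ai δai aj δaj ak δak 0 = N0f ai δai aj δaj ak δak 0 := by
    simp only [Df, N0f, cf, uf, bf, mul_zero, zero_mul, add_zero]
    linear_combination ((ak 1 - ai 1)/2) * e1 - ((aj 1 - ai 1)/2) * e2
  have hv1 : v 1 * Df ai δai aj δaj ak δak 0 = N1f ai δai aj δaj ak δak 0 := by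
    simp only [Df, N1f, cf, uf, bf, mul_zero, zero_mul, add_zero]
    linear_combination (-(ak 0 - ai 0)/2) * e1 + ((aj 0 - ai 0)/2) * e2
  refine ⟨ε/2, by positivity, Zf ai δai aj δaj ak δak, ⟨?_, ?_, ?_⟩, ?_, ?_⟩
  · exact contDiffOn_Zf ai δai aj δaj ak δak _ hDt
  · ext i
    fin_cases i
    · show N0f ai δai aj δaj ak δak 0 / Df ai δai aj δaj ak δak 0 = v 0
      rw [div_eq_iff hD0]
      linear_combination - hv0
    · show N1f ai δai aj δaj ak δak 0 / Df ai δai aj δaj ak δak 0 = v 1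
      rw [div_eq_iff hD0]
      linear_combination - hv1
  · intro t ht
    have hDt' := hDt t ht
    constructor
    · apply norm_eq_of_sq
      show (N0f ai δai aj δaj ak δak t / Df ai δai aj δaj ak δak t - (ai 0 + t * δai 0))^2
          + (N1f ai δai aj δaj ak δak t / Df ai δai aj δaj ak δak t - (ai 1 + t * δai 1))^2
        = (N0f ai δai aj δaj ak δak t / Df ai δai aj δaj ak δak t - (aj 0 + t * δaj 0))^2
          + (N1f ai δai aj δaj ak δak t / Df ai δai aj δaj ak δak t - (aj 1 + t * δaj 1))^2
      have key1t : ((aj 0 + t * δaj 0) - (ai 0 + t * δai 0)) * N0f ai δai aj δaj ak δak t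
          + ((aj 1 + t * δaj 1) - (ai 1 + t * δai 1)) * N1f ai δai aj δaj ak δak t
          = (((aj 0 + t * δaj 0)^2 + (aj 1 + t * δaj 1)^2
              - (ai 0 + t * δai 0)^2 - (ai 1 + t * δai 1)^2)/2) * Df ai δai aj δaj ak δak t := by
        simp only [N0f, N1f, Df, cf, uf, bf]
        ring
      rw [div_sub' hDt', div_sub' hDt', div_sub' hDt', div_sub' hDt',
        div_pow, div_pow, div_pow, div_pow, ← add_div, ← add_div]
      congr 1
      linear_combination (2 * Df ai δai aj δaj ak δak t) * key1t
    · apply norm_eq_of_sq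
      show (N0f ai δai aj δaj ak δak t / Df ai δai aj δaj ak δak t - (ai 0 + t * δai 0))^2
          + (N1f ai δai aj δaj ak δak t / Df ai δai aj δaj ak δak t - (ai 1 + t * δai 1))^2
        = (N0f ai δai aj δaj ak δak t / Df ai δai aj δaj ak δak t - (ak 0 + t * δak 0))^2
          + (N1f ai δai aj δaj ak δak t / Df ai δai aj δaj ak δak t - (ak 1 + t * δak 1))^2
      have key2t : ((ak 0 + t * δak 0) - (ai 0 + t * δai 0)) * N0f ai δai aj δaj ak δak t
          + ((ak 1 + t * δak 1) - (ai 1 + t * δai 1)) * N1f ai δai aj δaj ak δak t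
          = (((ak 0 + t * δak 0)^2 + (ak 1 + t * δak 1)^2
              - (ai 0 + t * δai 0)^2 - (ai 1 + t * δai 1)^2)/2) * Df ai δai aj δaj ak δak t := by
        simp only [N0f, N1f, Df, cf, uf, bf]
        ring
      rw [div_sub' hDt', div_sub' hDt', div_sub' hDt', div_sub' hDt',
        div_pow, div_pow, div_pow, div_pow, ← add_div, ← add_div]
      congr 1
      linear_combination (2 * Df ai δai aj δaj ak δak t) * key2t
  · rintro w ⟨-, -, hweq⟩ t ht
    have hDt' := hDt t ht
    have e1t : (w t 0 - (ai 0 + t * δai 0))^2 + (w t 1 - (ai 1 + t * δai 1))^2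
        = (w t 0 - (aj 0 + t * δaj 0))^2 + (w t 1 - (aj 1 + t * δaj 1))^2 := by
      simpa using norm_sq_of_eq _ _ (hweq t ht).1
    have e2t : (w t 0 - (ai 0 + t * δai 0))^2 + (w t 1 - (ai 1 + t * δai 1))^2
        = (w t 0 - (ak 0 + t * δak 0))^2 + (w t 1 - (ak 1 + t * δak 1))^2 := by
      simpa using norm_sq_of_eq _ _ (hweq t ht).2
    ext i
    fin_cases i
    · show w t 0 = N0f ai δai aj δaj ak δak t / Df ai δai aj δaj ak δak t
      rw [eq_div_iff hDt']
      simp only [N0f, Df, cf, uf, bf]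
      linear_combination ((ak 1 + t * δak 1 - (ai 1 + t * δai 1))/2) * e1t
        - ((aj 1 + t * δaj 1 - (ai 1 + t * δai 1))/2) * e2t
    · show w t 1 = N1f ai δai aj δaj ak δak t / Df ai δai aj δaj ak δak t
      rw [eq_div_iff hDt']
      simp only [N1f, Df, cf, uf, bf]
      linear_combination (-(ak 0 + t * δak 0 - (ai 0 + t * δai 0))/2) * e1t
        + ((aj 0 + t * δaj 0 - (ai 0 + t * δai 0))/2) * e2t
  · -- derivative
    have hv0r : v 0 * ((aj 0 - ai 0) * (ak 1 - ai 1) - (aj 1 - ai 1) * (ak 0 - ai 0))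
        = (aj 0^2 + aj 1^2 - ai 0^2 - ai 1^2)/2 * (ak 1 - ai 1)
          - (ak 0^2 + ak 1^2 - ai 0^2 - ai 1^2)/2 * (aj 1 - ai 1) := by
      linear_combination ((ak 1 - ai 1)/2) * e1 - ((aj 1 - ai 1)/2) * e2
    have hv1r : v 1 * ((aj 0 - ai 0) * (ak 1 - ai 1) - (aj 1 - ai 1) * (ak 0 - ai 0))
        = (ak 0^2 + ak 1^2 - ai 0^2 - ai 1^2)/2 * (aj 0 - ai 0)
          - (aj 0^2 + aj 1^2 - ai 0^2 - ai 1^2)/2 * (ak 0 - ai 0) := by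
      linear_combination (-(ak 0 - ai 0)/2) * e1 + ((aj 0 - ai 0)/2) * e2
    have hQ1 : Qvor aj ak ai = Df ai δai aj δaj ak δak 0 := by
      simp only [Qvor, Df, uf, bf, Matrix.det_fin_two_of, PiLp.sub_apply, mul_zero, zero_mul,
        add_zero] <;> ring
    have hQ2 : Qvor ak ai aj = Df ai δai aj δaj ak δak 0 := by
      simp only [Qvor, Df, uf, bf, Matrix.det_fin_two_of, PiLp.sub_apply, mul_zero, zero_mul,
        add_zero] <;> ring
    have hQ3 : Qvor ai aj ak = Df ai δai aj δaj ak δak 0 := by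
      simp only [Qvor, Df, uf, bf, Matrix.det_fin_two_of, PiLp.sub_apply, mul_zero, zero_mul,
        add_zero] <;> ring
    have hkey0 : N0df ai δai aj δaj ak δak 0 * Df ai δai aj δaj ak δak 0
        - N0f ai δai aj δaj ak δak 0 * Ddf ai δai aj δaj ak δak 0
        = (((v 0 - ai 0) * δai 0 + (v 1 - ai 1) * δai 1) * (ak 1 - aj 1)
          + ((v 0 - aj 0) * δaj 0 + (v 1 - aj 1) * δaj 1) * (ai 1 - ak 1)
          + ((v 0 - ak 0) * δak 0 + (v 1 - ak 1) * δak 1) * (aj 1 - ai 1))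
            * Df ai δai aj δaj ak δak 0 := by
      simp only [N0df, N0f, Ddf, Df, cdf, cf, uf, bf, mul_zero, zero_mul, add_zero]
      linear_combination
        (-(δai 0 * (ak 1 - aj 1) + δaj 0 * (ai 1 - ak 1) + δak 0 * (aj 1 - ai 1))) * hv0r
        + (-(δai 1 * (ak 1 - aj 1) + δaj 1 * (ai 1 - ak 1) + δak 1 * (aj 1 - ai 1))) * hv1r
    have hkey1 : N1df ai δai aj δaj ak δak 0 * Df ai δai aj δaj ak δak 0
        - N1f ai δai aj δaj ak δak 0 * Ddf ai δai aj δaj ak δak 0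
        = (((v 0 - ai 0) * δai 0 + (v 1 - ai 1) * δai 1) * (aj 0 - ak 0)
          + ((v 0 - aj 0) * δaj 0 + (v 1 - aj 1) * δaj 1) * (ak 0 - ai 0)
          + ((v 0 - ak 0) * δak 0 + (v 1 - ak 1) * δak 1) * (ai 0 - aj 0))
            * Df ai δai aj δaj ak δak 0 := by
      simp only [N1df, N1f, Ddf, Df, cdf, cf, uf, bf, mul_zero, zero_mul, add_zero]
      linear_combination
        (-(δai 0 * (aj 0 - ak 0) + δaj 0 * (ak 0 - ai 0) + δak 0 * (ai 0 - aj 0))) * hv0r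
        + (-(δai 1 * (aj 0 - ak 0) + δaj 1 * (ak 0 - ai 0) + δak 1 * (ai 0 - aj 0))) * hv1r
    have hF : HasDerivAt
        (fun t => (![N0f ai δai aj δaj ak δak t / Df ai δai aj δaj ak δak t,
          N1f ai δai aj δaj ak δak t / Df ai δai aj δaj ak δak t] : Fin 2 → ℝ))
        (![(N0df ai δai aj δaj ak δak 0 * Df ai δai aj δaj ak δak 0
            - N0f ai δai aj δaj ak δak 0 * Ddf ai δai aj δaj ak δak 0) / Df ai δai aj δaj ak δak 0 ^ 2,
          (N1df ai δai aj δaj ak δak 0 * Df ai δai aj δaj ak δak 0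
            - N1f ai δai aj δaj ak δak 0 * Ddf ai δai aj δaj ak δak 0) / Df ai δai aj δaj ak δak 0 ^ 2]) 0 := by
      apply hasDerivAt_pi.2
      intro i
      fin_cases i
      · exact (hasDerivAt_N0f ai δai aj δaj ak δak 0).div (hasDerivAt_Df ai δai aj δaj ak δak 0) hD0
      · exact (hasDerivAt_N1f ai δai aj δaj ak δak 0).div (hasDerivAt_Df ai δai aj δaj ak δak 0) hD0
    have hz : HasDerivAt (Zf ai δai aj δaj ak δak)
        ((WithLp.equiv 2 (Fin 2 → ℝ)).symm
          ![(N0df ai δai aj δaj ak δak 0 * Df ai δai aj δaj ak δak 0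
            - N0f ai δai aj δaj ak δak 0 * Ddf ai δai aj δaj ak δak 0) / Df ai δai aj δaj ak δak 0 ^ 2,
            (N1df ai δai aj δaj ak δak 0 * Df ai δai aj δaj ak δak 0
            - N1f ai δai aj δaj ak δak 0 * Ddf ai δai aj δaj ak δak 0) / Df ai δai aj δaj ak δak 0 ^ 2]) 0 := by
      exact ((EuclideanSpace.equiv (Fin 2) ℝ).symm.toContinuousLinearMap.hasFDerivAt.comp_hasDerivAt
        0 hF)
    have heq : ((WithLp.equiv 2 (Fin 2 → ℝ)).symm
          ![(N0df ai δai aj δaj ak δak 0 * Df ai δai aj δaj ak δak 0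
            - N0f ai δai aj δaj ak δak 0 * Ddf ai δai aj δaj ak δak 0) / Df ai δai aj δaj ak δak 0 ^ 2,
            (N1df ai δai aj δaj ak δak 0 * Df ai δai aj δaj ak δak 0
            - N1f ai δai aj δaj ak δak 0 * Ddf ai δai aj δaj ak δak 0) / Df ai δai aj δaj ak δak 0 ^ 2] : Plane)
        = Mvor aj ak ai v δai + Mvor ak ai aj v δaj + Mvor ai aj ak v δak := by
      ext i
      fin_cases i
      · show (N0df ai δai aj δaj ak δak 0 * Df ai δai aj δaj ak δak 0
            - N0f ai δai aj δaj ak δak 0 * Ddf ai δai aj δaj ak δak 0) / Df ai δai aj δaj ak δak 0 ^ 2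
          = (Mvor aj ak ai v δai + Mvor ak ai aj v δaj + Mvor ai aj ak v δak) 0
        simp only [PiLp.add_apply, Mvor, PiLp.smul_apply, smul_eq_mul, perp_apply_zero,
          PiLp.sub_apply, inner_two, hQ1, hQ2, hQ3]
        rw [div_mul_eq_mul_div, div_mul_eq_mul_div, div_mul_eq_mul_div, ← add_div,
          ← add_div, div_eq_div_iff (pow_ne_zero 2 hD0) hD0]
        linear_combination Df ai δai aj δaj ak δak 0 * hkey0
      · show (N1df ai δai aj δaj ak δak 0 * Df ai δai aj δaj ak δak 0
            - N1f ai δai aj δaj ak δak 0 * Ddf ai δai aj δaj ak δak 0) / Df ai δai aj δaj ak δak 0 ^ 2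
          = (Mvor aj ak ai v δai + Mvor ak ai aj v δaj + Mvor ai aj ak v δak) 1
        simp only [PiLp.add_apply, Mvor, PiLp.smul_apply, smul_eq_mul, perp_apply_one,
          PiLp.sub_apply, inner_two, hQ1, hQ2, hQ3]
        rw [div_mul_eq_mul_div, div_mul_eq_mul_div, div_mul_eq_mul_div, ← add_div,
          ← add_div, div_eq_div_iff (pow_ne_zero 2 hD0) hD0]
        linear_combination Df ai δai aj δaj ak δak 0 * hkey1
    rw [← heq]
    exact hz.hasDerivWithinAt
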